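/- arXiv:1012.0117 — 4 statements merged into one kernel-verified Lean document; each statement's English description precedes it below -/
import Mathlib

section
/- Let d = 2r ≥ 4, let ξ₁,…,ξ_d be independent geometric random variables with parameter q ∈ (0,1), and set T = |ξ₁ − ξ₂| + ∑_{i=3}^{d} ξᵢ. Then for every m ∈ ℕ, P(T = m) = (1/(1+q))(1−q)^{d−1} q^m s_{d−1}(γ_m), where s_{d−1}(γ_m) = ∑_{(k₁,…,k_{d−1})∈ℕ^{d−1}: ∑kᵢ=m}(2·1_{k₁≥1} + 1_{k₁=0}). -/
/-!
Parametrize (ξ₁, ξ₂) by j = min ξ₁ ξ₂ and z = ξ₁ − ξ₂ ∈ ℤ, so that ξ₁ + ξ₂ = 2j + |z|. The weight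
q^(ξ₁+ξ₂) then factorizes, the geometric series in j contributes 1/(1 − q²), and what remains is
q^m times the number of (z, ξ₃, …, ξ_d) ∈ ℤ × ℕ^(d−2) with |z| + ξ₃ + ⋯ + ξ_d = m. As k ≥ 1 is |z|
for two integers z and 0 only for z = 0, that number is s_{d−1}(γ_m). The series are rearranged in
ℝ≥0∞, where no summability side conditions arise, and transferred to ℝ at the end.
-/

/-- s_{d−1}(γ_m) given by its combinatorial description. -/
noncomputable def sdim (n m : ℕ) : ℝ :=
  ∑' f : Fin n → ℕ,
    if (∑ i, f i) = m then
      (if h : 0 < n then (if 1 ≤ f ⟨0, h⟩ then (2 : ℝ) else 1) else 1) else 0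

open ENNReal

def natProdIntEquiv : ℕ × ℤ ≃ ℕ × ℕ where
  toFun p := (p.1 + p.2.toNat, p.1 + (-p.2).toNat)
  invFun p := (min p.1 p.2, (p.1 : ℤ) - p.2)
  left_inv p := by ext <;> simp; omega
  right_inv p := by ext <;> simp <;> omega

lemma natProdIntEquiv_sub (p : ℕ × ℤ) :
    ((natProdIntEquiv p).1 : ℤ) - (natProdIntEquiv p).2 = p.2 := by
  simp [natProdIntEquiv]

lemma natProdIntEquiv_add (p : ℕ × ℤ) :
    (natProdIntEquiv p).1 + (natProdIntEquiv p).2 = 2 * p.1 + p.2.natAbs := by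
  simp [natProdIntEquiv]; omega

lemma tsum_int_natAbs (φ : ℕ → ℝ≥0∞) :
    ∑' z : ℤ, φ z.natAbs = ∑' k : ℕ, (if 1 ≤ k then 2 else 1) * φ k := by
  have hneg (n : ℕ) : (-((n : ℤ) + 1)).natAbs = n + 1 := by omega
  rw [tsum_of_nat_of_neg_add_one ENNReal.summable ENNReal.summable,
    tsum_eq_zero_add' ENNReal.summable, tsum_eq_zero_add' ENNReal.summable (f := fun k => _ * _)]
  simp only [hneg, Int.natAbs_natCast]
  simp [two_mul, ENNReal.tsum_add, add_assoc]

lemma tsum_natAbs_sub_mul_pow_add (Q : ℝ≥0∞) (ψ : ℤ → ℝ≥0∞) :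
    ∑' p : ℕ × ℕ, ψ ((p.1 : ℤ) - p.2) * Q ^ (p.1 + p.2)
      = (1 - Q ^ 2)⁻¹ * ∑' z : ℤ, ψ z * Q ^ z.natAbs := by
  rw [← natProdIntEquiv.tsum_eq, ENNReal.tsum_prod']
  simp only [natProdIntEquiv_sub, natProdIntEquiv_add, pow_add, pow_mul]
  simp_rw [mul_left_comm _ ((Q ^ 2) ^ _), ENNReal.tsum_mul_left, ENNReal.tsum_mul_right,
    ENNReal.tsum_geometric]

lemma tsum_tsum_natAbs_add_sum_eq (n m : ℕ) :
    ∑' (f : Fin n → ℕ) (z : ℤ), (if z.natAbs + ∑ i, f i = m then 1 else 0 : ℝ≥0∞)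
      = ∑' g : Fin (n + 1) → ℕ, if ∑ i, g i = m then (if 1 ≤ g 0 then 2 else 1) else 0 := by
  have hz (s : ℕ) : ∑' z : ℤ, (if z.natAbs + s = m then 1 else 0 : ℝ≥0∞)
      = ∑' k : ℕ, if k + s = m then (if 1 ≤ k then 2 else 1) else 0 := by
    simp only [tsum_int_natAbs (fun k => if k + s = m then 1 else 0), mul_ite, mul_one, mul_zero]
  simp only [hz]
  rw [ENNReal.tsum_comm, ← ENNReal.tsum_prod (f := fun k (f : Fin n → ℕ) => _),
    ← (Fin.consEquiv fun _ => ℕ).tsum_eq]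
  simp [Fin.consEquiv, Fin.sum_cons]

lemma tsum_natAbs_sub_add_sum_eq (Q E : ℝ≥0∞) (n m : ℕ) :
    (∑' p : (ℕ × ℕ) × (Fin n → ℕ),
      if ((p.1.1 : ℤ) - p.1.2).natAbs + ∑ i, p.2 i = m then
        (Q ^ p.1.1 * E) * (Q ^ p.1.2 * E) * ∏ i, (Q ^ p.2 i * E) else 0)
    = E ^ (n + 2) * (1 - Q ^ 2)⁻¹ * Q ^ m *
        ∑' (f : Fin n → ℕ) (z : ℤ), (if z.natAbs + ∑ i, f i = m then 1 else 0) := by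
  set ψ : (Fin n → ℕ) → ℤ → ℝ≥0∞ := fun f z => if z.natAbs + ∑ i, f i = m then 1 else 0
  have hterm (a b : ℕ) (f : Fin n → ℕ) :
      (if ((a : ℤ) - b).natAbs + ∑ i, f i = m then
        (Q ^ a * E) * (Q ^ b * E) * ∏ i, (Q ^ f i * E) else 0)
        = E ^ (n + 2) * (Q ^ (∑ i, f i) * (ψ f (a - b) * Q ^ (a + b))) := by
    simp only [ψ]
    split_ifs
    · rw [Finset.prod_mul_distrib, Finset.prod_pow_eq_pow_sum, Finset.prod_const,
        Finset.card_univ, Fintype.card_fin]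
      ring
    · simp
  have hpow (f : Fin n → ℕ) (z : ℤ) :
      Q ^ (∑ i, f i) * (ψ f z * Q ^ z.natAbs) = Q ^ m * ψ f z := by
    simp only [ψ]
    split_ifs with h
    · rw [← h]; ring
    · simp
  have hinner (f : Fin n → ℕ) :
      Q ^ (∑ i, f i) * ∑' p : ℕ × ℕ, ψ f (p.1 - p.2) * Q ^ (p.1 + p.2)
        = (1 - Q ^ 2)⁻¹ * (Q ^ m * ∑' z, ψ f z) := by
    rw [tsum_natAbs_sub_mul_pow_add, mul_left_comm, ← ENNReal.tsum_mul_left]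
    simp only [hpow, ENNReal.tsum_mul_left]
  rw [ENNReal.tsum_prod', ENNReal.tsum_comm]
  simp only [hterm, ENNReal.tsum_mul_left, hinner]
  ring

lemma sdim_succ_eq_toReal (n m : ℕ) :
    sdim (n + 1) m = (∑' g : Fin (n + 1) → ℕ,
      if ∑ i, g i = m then (if 1 ≤ g 0 then 2 else 1 : ℝ≥0∞) else 0).toReal := by
  rw [ENNReal.tsum_toReal_eq (fun g => by split_ifs <;> simp)]
  refine tsum_congr fun g => ?_
  split_ifs <;> simp_all [Fin.zero_eta]

lemma tsum_geometric_natAbs_sub_add_sum {q : ℝ} (hq0 : 0 ≤ q) (hq1 : q < 1) (n m : ℕ) :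
    (∑' p : (ℕ × ℕ) × (Fin n → ℕ),
      if ((p.1.1 : ℤ) - p.1.2).natAbs + ∑ i, p.2 i = m then
        (q ^ p.1.1 * (1 - q)) * (q ^ p.1.2 * (1 - q)) * ∏ i, (q ^ p.2 i * (1 - q)) else 0)
    = (1 - q) ^ (n + 2) * (1 - q ^ 2)⁻¹ * q ^ m * sdim (n + 1) m := by
  have h1q : 0 ≤ 1 - q := by linarith
  set Q := ENNReal.ofReal q
  set E := ENNReal.ofReal (1 - q)
  have hterm (p : (ℕ × ℕ) × (Fin n → ℕ)) :
      (if ((p.1.1 : ℤ) - p.1.2).natAbs + ∑ i, p.2 i = m then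
        (q ^ p.1.1 * (1 - q)) * (q ^ p.1.2 * (1 - q)) * ∏ i, (q ^ p.2 i * (1 - q)) else 0)
      = (if ((p.1.1 : ℤ) - p.1.2).natAbs + ∑ i, p.2 i = m then
        (Q ^ p.1.1 * E) * (Q ^ p.1.2 * E) * ∏ i, (Q ^ p.2 i * E) else 0).toReal := by
    split_ifs <;> simp [Q, E, ENNReal.toReal_prod, hq0, h1q]
  have hfin (p : (ℕ × ℕ) × (Fin n → ℕ)) :
      (if ((p.1.1 : ℤ) - p.1.2).natAbs + ∑ i, p.2 i = m then
        (Q ^ p.1.1 * E) * (Q ^ p.1.2 * E) * ∏ i, (Q ^ p.2 i * E) else 0) ≠ ⊤ := by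
    split_ifs
    · exact ENNReal.mul_ne_top (by finiteness) (ENNReal.prod_ne_top fun i _ => by finiteness)
    · exact zero_ne_top
  have hQ2 : (1 - Q ^ 2).toReal = 1 - q ^ 2 := by
    rw [ENNReal.toReal_sub_of_le (pow_le_one₀ bot_le (ENNReal.ofReal_le_one.2 hq1.le)) one_ne_top]
    simp [hq0]
  rw [tsum_congr hterm, ← ENNReal.tsum_toReal_eq hfin, tsum_natAbs_sub_add_sum_eq,
    tsum_tsum_natAbs_add_sum_eq, sdim_succ_eq_toReal]
  simp [ENNReal.toReal_mul, hQ2, Q, E, hq0, h1q]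

/-- for d = 2r, T = |ξ₁ − ξ₂| + ∑_{i=3}^{d} ξᵢ with ξ₁,…,ξ_d independent
geometric(q), one has P(T = m) = (1/(1+q))(1−q)^{d−1} q^m s_{d−1}(γ_m). -/
theorem law_T_even (q : ℝ) (hq : q ∈ Set.Ioo (0:ℝ) 1) (r m : ℕ) (hr : 2 ≤ r) :
    (∑' p : (ℕ × ℕ) × (Fin (2 * r - 2) → ℕ),
      if ((p.1.1 : ℤ) - p.1.2).natAbs + (∑ i, p.2 i) = m then
        (q ^ p.1.1 * (1 - q)) * (q ^ p.1.2 * (1 - q)) * (∏ i, q ^ p.2 i * (1 - q))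
      else 0)
    = (1 / (1 + q)) * (1 - q) ^ (2 * r - 1) * q ^ m * sdim (2 * r - 1) m := by
  obtain ⟨hq0, hq1⟩ := hq
  obtain ⟨n, hn, hn'⟩ : ∃ n, 2 * r - 2 = n ∧ 2 * r - 1 = n + 1 := ⟨_, rfl, by omega⟩
  rw [hn, hn', tsum_geometric_natAbs_sub_add_sum hq0.le hq1]
  have hfactor : (1 - q) ^ (n + 2) * (1 - q ^ 2)⁻¹ = 1 / (1 + q) * (1 - q) ^ (n + 1) := by
    have h1q : 1 - q ≠ 0 := by linarith
    have h1q' : 1 + q ≠ 0 := by linarith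
    rw [show 1 - q ^ 2 = (1 + q) * (1 - q) by ring]
    field_simp
    ring
  rw [hfactor]
end

section
/- Fix q ∈ (0,1) and x, y, b ∈ ℕ with x ≤ b and y ≤ b. Let ξ₁, ξ₂ be independent geometric variables with parameter q. Then P(min(b, |x + ξ₁ − ξ₂|) = y) equals ((1−q)/(1+q))(q^{|y−x|} + q^{x+y}) if 0 < y ≤ b−1; ((1−q)/(1+q)) q^x if y = 0 and y ≤ b−1; (1/(1+q)) q^b (q^{−x} + q^x) if y = b > 0; and 1 if y = b = 0. -/
/-! The difference `ξ₁ - ξ₂` of two independent geometric variables is two-sided geometric,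
`P(ξ₁ - ξ₂ = k) = (1 - q) / (1 + q) * q ^ |k|`: in the coordinates `(k, m) = (ξ₁ - ξ₂, min ξ₁ ξ₂)`
the weight `q ^ (ξ₁ + ξ₂)` factors as `q ^ |k| * (q ^ 2) ^ m`. The event `min b |x + k| = y` is
`{y - x, -y - x}` when `y < b`, and the two tails `|x + k| ≥ b` when `y = b`, whose geometric
sums give the four cases. -/

def diffMinEquiv : ℤ × ℕ ≃ ℕ × ℕ where
  toFun p := (p.2 + p.1.toNat, p.2 + (-p.1).toNat)
  invFun p := ((p.1 : ℤ) - p.2, min p.1 p.2)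
  left_inv := fun ⟨k, m⟩ => Prod.ext (by dsimp; omega) (by dsimp; omega)
  right_inv := fun ⟨i, j⟩ => Prod.ext (by dsimp; omega) (by dsimp; omega)

section

variable {q : ℝ}

theorem hasSum_ite_le_pow (hq0 : 0 ≤ q) (hq1 : q < 1) (t : ℕ) :
    HasSum (fun n : ℕ => if t ≤ n then q ^ n else 0) (q ^ t / (1 - q)) := by
  rw [← hasSum_nat_add_iff' t]
  simp only [le_add_iff_nonneg_left, zero_le, if_true]
  rw [Finset.sum_eq_zero fun i hi => if_neg (by simpa using hi), sub_zero]
  simpa [pow_add, div_eq_inv_mul] using (hasSum_geometric_of_lt_one hq0 hq1).mul_right (q ^ t)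

theorem hasSum_pow_natAbs (hq0 : 0 ≤ q) (hq1 : q < 1) :
    HasSum (fun k : ℤ => q ^ k.natAbs) ((1 + q) / (1 - q)) := by
  have hpos := hasSum_geometric_of_lt_one hq0 hq1
  have hneg : HasSum (fun n : ℕ => q ^ (-((n : ℤ) + 1)).natAbs) (q * (1 - q)⁻¹) :=
    (hpos.mul_left q).congr_fun fun n => by rw [← pow_succ']; rfl
  convert HasSum.of_nat_of_neg_add_one (f := fun k : ℤ => q ^ k.natAbs) hpos hneg using 1
  ring

theorem hasSum_ite_sub_geometric (hq0 : 0 ≤ q) (hq1 : q < 1) (P : ℤ → Prop) [DecidablePred P]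
    {S : ℝ} (hS : HasSum (fun k : ℤ => if P k then q ^ k.natAbs else 0) S) :
    HasSum (fun p : ℕ × ℕ =>
        if P (p.1 - p.2) then (q ^ p.1 * (1 - q)) * (q ^ p.2 * (1 - q)) else 0)
      ((1 - q) / (1 + q) * S) := by
  have hq2 : HasSum (fun m : ℕ => (q ^ 2) ^ m) (1 - q ^ 2)⁻¹ :=
    hasSum_geometric_of_lt_one (by positivity) (by nlinarith)
  have hprod := hS.mul hq2 <| hS.summable.mul_of_nonneg hq2.summable
    (fun k => by positivity) (fun m => by positivity)
  have hvalue : (1 - q) / (1 + q) * S = (1 - q) ^ 2 * (S * (1 - q ^ 2)⁻¹) := by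
    have : (1 : ℝ) + q ≠ 0 := by linarith
    have : (1 : ℝ) - q ^ 2 ≠ 0 := by nlinarith
    field_simp
    ring
  rw [← diffMinEquiv.hasSum_iff, hvalue]
  refine (hprod.mul_left _).congr_fun fun ⟨k, m⟩ => ?_
  have hdiff : ((m + k.toNat : ℕ) : ℤ) - (m + (-k).toNat : ℕ) = k := by push_cast; omega
  have hexp : (m + k.toNat) + (m + (-k).toNat) = k.natAbs + 2 * m := by omega
  simp only [Function.comp_apply, diffMinEquiv, Equiv.coe_fn_mk, hdiff]
  split_ifs
  · rw [mul_mul_mul_comm, ← pow_add, hexp, pow_add, pow_mul]; ring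
  · simp

theorem hasSum_ite_natAbs_add_eq_zero (x : ℕ) :
    HasSum (fun k : ℤ => if ((x : ℤ) + k).natAbs = 0 then q ^ k.natAbs else 0) (q ^ x) :=
  (hasSum_ite_eq (-(x : ℤ)) (q ^ x)).congr_fun fun k => by
    by_cases hk : k = -x
    · simp [hk]
    · rw [if_neg (by omega), if_neg hk]

theorem hasSum_ite_natAbs_add_eq_of_pos (x : ℕ) {y : ℕ} (hy : 1 ≤ y) :
    HasSum (fun k : ℤ => if ((x : ℤ) + k).natAbs = y then q ^ k.natAbs else 0)
      (q ^ ((y : ℤ) - x).natAbs + q ^ (x + y)) := by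
  refine ((hasSum_ite_eq ((y : ℤ) - x) _).add (hasSum_ite_eq (-(y : ℤ) - x) _)).congr_fun
    fun k => ?_
  by_cases h₁ : k = y - x
  · rw [if_pos (by omega), if_pos h₁, if_neg (by omega), add_zero, h₁]
  by_cases h₂ : k = -y - x
  · rw [if_pos (by omega), if_neg h₁, if_pos h₂, zero_add, h₂]
    congr 1; omega
  · rw [if_neg (by omega), if_neg h₁, if_neg h₂, add_zero]

theorem hasSum_ite_le_natAbs_add (hq0 : 0 ≤ q) (hq1 : q < 1) {b x : ℕ} (hb : 1 ≤ b)
    (hxb : x ≤ b) :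
    HasSum (fun k : ℤ => if b ≤ ((x : ℤ) + k).natAbs then q ^ k.natAbs else 0)
      ((q ^ (b - x) + q ^ (b + x)) / (1 - q)) := by
  rw [add_div, ← Nat.sub_add_cancel (by omega : 1 ≤ b + x), pow_succ', mul_div_assoc]
  refine HasSum.of_nat_of_neg_add_one ?_ ?_
  · refine (hasSum_ite_le_pow hq0 hq1 (b - x)).congr_fun fun n => ?_
    rw [Int.natAbs_natCast]
    exact if_congr (by omega) rfl rfl
  · refine ((hasSum_ite_le_pow hq0 hq1 (b + x - 1)).mul_left q).congr_fun fun n => ?_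
    rw [mul_ite, mul_zero, ← pow_succ']
    exact if_congr (by omega) rfl rfl

end

/-- law of min(b, |x + ξ₁ − ξ₂|) for independent geometric ξ₁, ξ₂ of
parameter q, when x ≤ b and y ≤ b. -/
theorem law_min_reflected_jump (q : ℝ) (hq : q ∈ Set.Ioo (0:ℝ) 1) (b x y : ℕ)
    (hxb : x ≤ b) (hyb : y ≤ b) :
    (∑' p : ℕ × ℕ,
      if min b (((x : ℤ) + p.1 - p.2).natAbs) = y then
        (q ^ p.1 * (1 - q)) * (q ^ p.2 * (1 - q)) else 0)
    = if y < b then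
        (if 1 ≤ y then ((1 - q) / (1 + q)) * (q ^ (((y : ℤ) - x).natAbs) + q ^ (x + y))
         else ((1 - q) / (1 + q)) * q ^ x)
      else
        (if 1 ≤ y then (1 / (1 + q)) * q ^ b * (q ^ (-(x : ℤ)) + q ^ (x : ℤ))
         else 1) := by
  obtain ⟨hq0, hq1⟩ := hq
  have htsum {S : ℝ}
      (hS : HasSum (fun k : ℤ => if min b ((x : ℤ) + k).natAbs = y then q ^ k.natAbs else 0) S) :
      (∑' p : ℕ × ℕ, if min b (((x : ℤ) + p.1 - p.2).natAbs) = y then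
        (q ^ p.1 * (1 - q)) * (q ^ p.2 * (1 - q)) else 0) = (1 - q) / (1 + q) * S := by
    simpa only [add_sub_assoc] using (hasSum_ite_sub_geometric hq0.le hq1 _ hS).tsum_eq
  have h1q : 1 - q ≠ 0 := by linarith
  rcases hyb.lt_or_eq with hlt | rfl
  · have hmin (n : ℕ) : min b n = y ↔ n = y := by omega
    rw [if_pos hlt]
    split_ifs with hy
    · exact htsum ((hasSum_ite_natAbs_add_eq_of_pos x hy).congr_fun fun k =>
        if_congr (hmin _) rfl rfl)
    · obtain rfl : y = 0 := by omega
      exact htsum ((hasSum_ite_natAbs_add_eq_zero x).congr_fun fun k => if_congr (hmin _) rfl rfl)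
  · rw [if_neg (lt_irrefl y)]
    split_ifs with hy
    · rw [htsum ((hasSum_ite_le_natAbs_add hq0.le hq1 hy hxb).congr_fun fun k =>
        if_congr min_eq_left_iff rfl rfl), zpow_neg, zpow_natCast, pow_sub₀ q hq0.ne' hxb, pow_add]
      field_simp
    · obtain rfl : y = 0 := by omega
      rw [htsum ((hasSum_pow_natAbs hq0.le hq1).congr_fun fun k => if_pos (Nat.zero_min _))]
      field_simp
end

section
/- For q ∈ (0,1) and natural numbers x, y, z with 0 < z ≤ y: ∑_{u=0}^{z} (1_{u=0} + 2·1_{u>0}) R(u,x) P̄^{u←}(y,z) = (1−q)(1_{x=0} + 2·1_{x>0}) q^{max(x,z) + y − 2z}, where R(u,x) = ((1−q)/(1+q))(q^{|u−x|}+q^{u+x}) for x ≥ 1 and R(u,0) = ((1−q)/(1+q)) q^u, and P̄^{u←}(y,z) = (1−q) q^{y−z} if z ≥ u+1 and q^{y−u} if z = u. -/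
/-!
Since `P̄^{u←}(y, z) = q^{y-z}` times `1` (for `u = z`) or `1 - q` (for `u < z`), the factor
`q^{y-z}` comes out and the sum becomes `S_z = (1-q) ∑_{u<z} c_u R(u,x) + 2 R(z,x)` with
`c_u = 1_{u=0} + 2·1_{u>0}`. The increments `S_{z+1} - S_z = 2 (R(z+1,x) - q R(z,x))` vanish for
`z ≥ x` and equal `2 (1-q)² q^{x-z-1}` for `z < x`, exactly the increments of
`(1-q) c_x q^{max(x,z) - z}`; the induction starts from `(1 + q) R(0,x) = (1-q) c_x q^x`.
-/

noncomputable def Rker (q : ℝ) (x y : ℕ) : ℝ :=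
  if y = 0 then ((1 - q) / (1 + q)) * q ^ x
  else ((1 - q) / (1 + q)) * (q ^ (((x : ℤ) - y).natAbs) + q ^ (x + y))

/-- The kernel P̄^{u←}: the law at y of max(u, x − ξ), for u ≤ y ≤ x:
P̄^{u←}(x,y) = (1−q) q^{x−y} if y ≥ u+1, and q^{x−u} if y = u. -/
noncomputable def Pleft (q : ℝ) (u x y : ℕ) : ℝ :=
  if y = u then q ^ (x - u) else (1 - q) * q ^ (x - y)

open Finset

lemma Pleft_eq_ite_mul_pow (q : ℝ) (u y z : ℕ) :
    Pleft q u y z = (if u = z then 1 else 1 - q) * q ^ (y - z) := by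
  unfold Pleft
  split_ifs <;> subst_vars <;> simp_all

lemma Rker_succ_sub_mul {q : ℝ} (hq : 1 + q ≠ 0) (u x : ℕ) :
    Rker q (u + 1) x - q * Rker q u x
      = if u < x then (1 - q) ^ 2 * q ^ (x - (u + 1)) else 0 := by
  unfold Rker
  split_ifs
  · omega
  · ring
  · obtain ⟨d, rfl⟩ : ∃ d, x = u + 1 + d := ⟨x - (u + 1), by omega⟩
    have e1 : (((u + 1 : ℕ) : ℤ) - ((u + 1 + d : ℕ) : ℤ)).natAbs = d := by omega
    have e2 : (((u : ℕ) : ℤ) - ((u + 1 + d : ℕ) : ℤ)).natAbs = d + 1 := by omega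
    rw [e1, e2, show u + 1 + d - (u + 1) = d by omega]
    field_simp
    ring
  · obtain ⟨d, rfl⟩ : ∃ d, u = x + d := ⟨u - x, by omega⟩
    have e1 : (((x + d + 1 : ℕ) : ℤ) - (x : ℤ)).natAbs = d + 1 := by omega
    have e2 : (((x + d : ℕ) : ℤ) - (x : ℤ)).natAbs = d := by omega
    rw [e1, e2]
    ring

lemma one_add_mul_Rker_zero {q : ℝ} (hq : 1 + q ≠ 0) (x : ℕ) :
    (1 + q) * Rker q 0 x = (1 - q) * (if x = 0 then 1 else 2) * q ^ x := by
  unfold Rker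
  split_ifs with hx
  · subst hx
    field_simp
  · rw [show (((0 : ℕ) : ℤ) - x).natAbs = x by omega]
    field_simp
    ring

lemma mul_pow_max_sub_succ (q : ℝ) (x z : ℕ) :
    (1 - q) * (if x = 0 then 1 else 2) * q ^ (max x (z + 1) - (z + 1))
      = (1 - q) * (if x = 0 then 1 else 2) * q ^ (max x z - z)
        + 2 * (if z < x then (1 - q) ^ 2 * q ^ (x - (z + 1)) else 0) := by
  split_ifs with hx h h
  · omega
  · simp [hx]
  · rw [max_eq_left h, max_eq_left (by omega), show x - z = x - (z + 1) + 1 by omega]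
    ring
  · rw [max_eq_right (by omega), max_eq_right (by omega)]
    simp

lemma one_sub_mul_sum_Rker_add {q : ℝ} (hq : 1 + q ≠ 0) (x : ℕ) {z : ℕ} (hz : 0 < z) :
    (1 - q) * ∑ u ∈ range z, (if u = 0 then 1 else 2) * Rker q u x + 2 * Rker q z x
      = (1 - q) * (if x = 0 then 1 else 2) * q ^ (max x z - z) := by
  induction z, hz using Nat.le_induction with
  | base =>
    calc (1 - q) * ∑ u ∈ range 1, (if u = 0 then 1 else 2) * Rker q u x + 2 * Rker q 1 x
        = (1 + q) * Rker q 0 x + 2 * (Rker q (0 + 1) x - q * Rker q 0 x) := by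
          simp only [sum_range_one, ↓reduceIte, zero_add]; ring
      _ = _ := by
          rw [one_add_mul_Rker_zero hq, Rker_succ_sub_mul hq, mul_pow_max_sub_succ]
          simp
  | succ z hz ih =>
    calc (1 - q) * ∑ u ∈ range (z + 1), (if u = 0 then 1 else 2) * Rker q u x
          + 2 * Rker q (z + 1) x
        = ((1 - q) * ∑ u ∈ range z, (if u = 0 then 1 else 2) * Rker q u x + 2 * Rker q z x)
          + 2 * (Rker q (z + 1) x - q * Rker q z x) := by
          rw [sum_range_succ, if_neg (by omega)]; ring
      _ = _ := by rw [ih, Rker_succ_sub_mul hq, mul_pow_max_sub_succ]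

/-- identity (desintegration1) of the paper's Lemma 8. -/
theorem desintegration1 (q : ℝ) (hq : q ∈ Set.Ioo (0:ℝ) 1) (x y z : ℕ)
    (hz : 0 < z) (hzy : z ≤ y) :
    (∑ u ∈ Finset.range (z + 1),
      (if u = 0 then (1 : ℝ) else 2) * Rker q u x * Pleft q u y z)
    = (1 - q) * (if x = 0 then (1 : ℝ) else 2) * q ^ (max x z + y - 2 * z) := by
  have hq' : 1 + q ≠ 0 := by linarith [hq.1]
  have hbefore : ∀ u ∈ range z, (if u = 0 then (1 : ℝ) else 2) * Rker q u x * Pleft q u y z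
      = (1 - q) * ((if u = 0 then 1 else 2) * Rker q u x) * q ^ (y - z) := by
    intro u hu
    rw [Pleft_eq_ite_mul_pow, if_neg (mem_range.1 hu).ne]
    ring
  rw [sum_range_succ, sum_congr rfl hbefore, ← sum_mul, ← mul_sum, Pleft_eq_ite_mul_pow,
    if_pos rfl, if_neg hz.ne', one_mul, ← add_mul, one_sub_mul_sum_Rker_add hq' x hz,
    show max x z + y - 2 * z = (max x z - z) + (y - z) by omega, pow_add]
  ring
end

section
/- For q ∈ (0,1), y ∈ ℕ, y' ∈ ℕ with y' ≥ 1 and y' ≤ a: ∑_{v=y'}^{a} q^{max(v,y) − 2v} · R̄^{→v}(min(y,v), y') = (1/(1−q)) q^{−a} R(y, y'), where R(y,y') = ((1−q)/(1+q))(q^{|y−y'|} + q^{y+y'}) (since y' ≥ 1), and R̄^{→v}(x, y') = ((1−q)/(1+q))(q^{|y'−x|} + q^{x+y'}) if y' ≤ v−1, and R̄^{→v}(x, v) = (1/(1+q)) q^v (q^{−x} + q^x) if y' = v > 0. -/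
/-- The kernel R̄^{→v}: the law at y of min(v, |x + ξ₁ − ξ₂|), i.e.
R̄^{→v}(x,y) = ((1−q)/(1+q))(q^{|y−x|}+q^{x+y}) for 0 < y ≤ v−1,
((1−q)/(1+q))q^x for y = 0 ≤ v−1, (1/(1+q)) q^v (q^{−x}+q^x) for y = v > 0,
and 1 for y = v = 0. -/
noncomputable def Rright (q : ℝ) (v x y : ℕ) : ℝ :=
  if y = v then
    (if 1 ≤ y then (1 / (1 + q)) * q ^ v * (q ^ (-(x : ℤ)) + q ^ (x : ℤ)) else 1)
  else Rker q x y

section Kernels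

variable {q : ℝ}

lemma Rker_add_left {x y : ℕ} (hy : y ≠ 0) (hyx : y ≤ x) (d : ℕ) :
    Rker q (x + d) y = q ^ d * Rker q x y := by
  have habs (n : ℕ) (hn : y ≤ n) : ((n : ℤ) - y).natAbs = n - y := by omega
  simp only [Rker, if_neg hy, habs x hyx, habs (x + d) (by omega),
    Nat.sub_add_comm hyx, pow_add]
  ring

lemma zpow_max_mul_add_zpow_min (hq : q ≠ 0) (x y : ℕ) :
    q ^ (max (x : ℤ) y) * (q ^ (-min (x : ℤ) y) + q ^ min (x : ℤ) y)
      = q ^ ((x : ℤ) - y).natAbs + q ^ (x + y) := by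
  rw [mul_add, ← zpow_add₀ hq, ← zpow_add₀ hq, ← sub_eq_add_neg, max_sub_min_eq_abs',
    max_add_min, ← Int.natCast_natAbs, zpow_natCast, ← Nat.cast_add, zpow_natCast]

lemma summand_eq_of_lt (hq : q ≠ 0) {y y' v : ℕ} (hy' : 1 ≤ y') (hv : y' < v) :
    q ^ ((max v y : ℤ) - 2 * v) * Rright q v (min y v) y' = q ^ (-(v : ℤ)) * Rker q y y' := by
  rw [Rright, if_neg hv.ne]
  rcases le_total y v with hyv | hvy
  · rw [min_eq_left hyv, max_eq_left (by exact_mod_cast hyv)]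
    ring_nf
  · obtain ⟨d, rfl⟩ := Nat.exists_eq_add_of_le hvy
    rw [min_eq_right hvy, max_eq_right (by exact_mod_cast hvy), Rker_add_left (by omega) hv.le,
      ← mul_assoc, ← zpow_natCast q d]
    congr 1
    rw [← zpow_add₀ hq]
    push_cast
    ring_nf

lemma summand_eq_self (hq : q ≠ 0) (hq₁ : q ≠ 1) (hq₂ : 1 + q ≠ 0) {y y' : ℕ} (hy' : 1 ≤ y') :
    q ^ ((max y' y : ℤ) - 2 * y') * Rright q y' (min y y') y'
      = 1 / (1 - q) * q ^ (-(y' : ℤ)) * Rker q y y' := by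
  have hsub : 1 - q ≠ 0 := sub_ne_zero.mpr hq₁.symm
  rw [Rright, if_pos rfl, if_pos hy', Rker, if_neg (by omega), Nat.cast_min, max_comm,
    show (max (y : ℤ) y' - 2 * y') = max (y : ℤ) y' + -(y' : ℤ) + -(y' : ℤ) by ring,
    zpow_add₀ hq, zpow_add₀ hq, ← zpow_max_mul_add_zpow_min hq, zpow_neg, zpow_natCast]
  field_simp

end Kernels

/-- identity (desintegration4) of the paper's Lemma 8:
∑_{v=y'}^{a} q^{max(v,y)−2v} R̄^{→v}(min(y,v), y') = (1/(1−q)) q^{−a} R(y,y'),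
for 1 ≤ y' ≤ a, y ∈ ℕ. -/
theorem desintegration4 (q : ℝ) (hq : q ∈ Set.Ioo (0:ℝ) 1) (a y y' : ℕ)
    (hy' : 1 ≤ y') (hy'a : y' ≤ a) :
    (∑ v ∈ Finset.Icc y' a,
      q ^ ((max v y : ℤ) - 2 * v) * Rright q v (min y v) y')
    = (1 / (1 - q)) * q ^ (-(a : ℤ)) * Rker q y y' := by
  have hq₀ : q ≠ 0 := hq.1.ne'
  have hsub : 1 - q ≠ 0 := sub_ne_zero.mpr hq.2.ne'
  induction a, hy'a using Nat.le_induction with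
  | base =>
    rw [Finset.Icc_self, Finset.sum_singleton,
      summand_eq_self hq₀ hq.2.ne (by linarith [hq.1]) hy']
  | succ a ha ih =>
    rw [Finset.sum_Icc_succ_top (by omega), ih, summand_eq_of_lt hq₀ hy' (by omega)]
    have hgeom : 1 / (1 - q) * q ^ (-(a : ℤ)) + q ^ (-((a + 1 : ℕ) : ℤ))
        = 1 / (1 - q) * q ^ (-((a + 1 : ℕ) : ℤ)) := by
      rw [zpow_neg, zpow_neg, zpow_natCast, zpow_natCast, pow_succ]
      field_simp
      ring
    rw [← hgeom]
    ring
end
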